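/- Let C be a finite tensor category and A an algebra in C. Then (i) for all M, N ∈ C_A, the internal Hom of the left C-module category C_A is uhom_{C_A}(M, N) = (M ⊗_A *N)*, and (ii) for all M, N ∈ C_A, the internal Hom of the opposite (right) module category is uhom_{(C_A)^op}(M, N) = *(N ⊗_A *M). -/

import Mathlib

/-!
Common framework: left/right module categories over a tensor category,
module functors, module natural transformations, pre-balancings and
module (co)ends, internal Homs, following Bortolussi–Mombelli,
"(co)ends for representations of tensor categories".

Throughout, a *finite tensor category* is modelled as an abelian,
`k`-linear, monoidally preadditive/linear rigid monoidal category with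
simple unit object (finiteness of the underlying abelian category is not
used in the statements below and is omitted).
-/

open CategoryTheory Category MonoidalCategory Opposite

universe w w₁ w₂ v u v₁ u₁ v₂ u₂ v₃ u₃ v₄ u₄

namespace TensorModuleEnd

variable (C : Type u) [Category.{v} C] [MonoidalCategory C]

/-- A left module category structure of a monoidal category `C` on a category `M`.
The action bifunctor is encoded as a functor `act : C ⥤ M ⥤ M`, with
`X ▷ m = (act.obj X).obj m`, together with coherent associativity and
unit isomorphisms (equations (1), (2) of the paper). -/
structure LeftModuleStr (M : Type u₁) [Category.{v₁} M] where
  act : C ⥤ M ⥤ M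
  assoc : ∀ (X Y : C) (m : M),
    (act.obj (X ⊗ Y)).obj m ≅ (act.obj X).obj ((act.obj Y).obj m)
  unitIso : ∀ (m : M), (act.obj (𝟙_ C)).obj m ≅ m
  assoc_natural_left : ∀ {X X' : C} (f : X ⟶ X') (Y : C) (m : M),
    (act.map (f ▷ Y)).app m ≫ (assoc X' Y m).hom =
      (assoc X Y m).hom ≫ (act.map f).app ((act.obj Y).obj m)
  assoc_natural_mid : ∀ (X : C) {Y Y' : C} (g : Y ⟶ Y') (m : M),
    (act.map (X ◁ g)).app m ≫ (assoc X Y' m).hom =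
      (assoc X Y m).hom ≫ (act.obj X).map ((act.map g).app m)
  assoc_natural_obj : ∀ (X Y : C) {m m' : M} (h : m ⟶ m'),
    (act.obj (X ⊗ Y)).map h ≫ (assoc X Y m').hom =
      (assoc X Y m).hom ≫ (act.obj X).map ((act.obj Y).map h)
  unit_natural : ∀ {m m' : M} (h : m ⟶ m'),
    (act.obj (𝟙_ C)).map h ≫ (unitIso m').hom = (unitIso m).hom ≫ h
  pentagon : ∀ (X Y Z : C) (m : M),
    (assoc (X ⊗ Y) Z m).hom ≫ (assoc X Y ((act.obj Z).obj m)).hom =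
      (act.map (α_ X Y Z).hom).app m ≫ (assoc X (Y ⊗ Z) m).hom ≫
        (act.obj X).map ((assoc Y Z m).hom)
  triangle : ∀ (X : C) (m : M),
    (assoc X (𝟙_ C) m).hom ≫ (act.obj X).map ((unitIso m).hom) =
      (act.map (ρ_ X).hom).app m

/-- A right module category structure of `C` on `M`; here `(act.obj X).obj m`
plays the role of `m ◁ X` (equations (11), (12) of the paper). -/
structure RightModuleStr (M : Type u₁) [Category.{v₁} M] where
  act : C ⥤ M ⥤ M
  assoc : ∀ (X Y : C) (m : M),
    (act.obj (X ⊗ Y)).obj m ≅ (act.obj Y).obj ((act.obj X).obj m)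
  unitIso : ∀ (m : M), (act.obj (𝟙_ C)).obj m ≅ m
  assoc_natural_left : ∀ {X X' : C} (f : X ⟶ X') (Y : C) (m : M),
    (act.map (f ▷ Y)).app m ≫ (assoc X' Y m).hom =
      (assoc X Y m).hom ≫ (act.obj Y).map ((act.map f).app m)
  assoc_natural_mid : ∀ (X : C) {Y Y' : C} (g : Y ⟶ Y') (m : M),
    (act.map (X ◁ g)).app m ≫ (assoc X Y' m).hom =
      (assoc X Y m).hom ≫ (act.map g).app ((act.obj X).obj m)
  assoc_natural_obj : ∀ (X Y : C) {m m' : M} (h : m ⟶ m'),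
    (act.obj (X ⊗ Y)).map h ≫ (assoc X Y m').hom =
      (assoc X Y m).hom ≫ (act.obj Y).map ((act.obj X).map h)
  unit_natural : ∀ {m m' : M} (h : m ⟶ m'),
    (act.obj (𝟙_ C)).map h ≫ (unitIso m').hom = (unitIso m).hom ≫ h
  pentagon : ∀ (X Y Z : C) (m : M),
    (act.map (α_ X Y Z).hom).app m ≫ (assoc X (Y ⊗ Z) m).hom ≫
        (assoc Y Z ((act.obj X).obj m)).hom =
      (assoc (X ⊗ Y) Z m).hom ≫ (act.obj Z).map ((assoc X Y m).hom)
  triangle : ∀ (X : C) (m : M),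
    (assoc (𝟙_ C) X m).hom ≫ (act.obj X).map ((unitIso m).hom) =
      (act.map (λ_ X).hom).app m

variable {C}

/-- A left module category `M` over `C` is *exact* if `P ▷ m` is projective in `M`
for every projective `P : C` and every `m : M`. -/
def LeftModuleStr.IsExact {M : Type u₁} [Category.{v₁} M] (ρ : LeftModuleStr C M) : Prop :=
  ∀ (P : C), Projective P → ∀ m : M, Projective ((ρ.act.obj P).obj m)

/-- A `C`-module functor `(F, c)` between left `C`-module categories
(equations (3), (4) of the paper). -/
structure ModuleFunctor {M : Type u₁} [Category.{v₁} M] {N : Type u₂} [Category.{v₂} N]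
    (ρ : LeftModuleStr C M) (σ : LeftModuleStr C N) where
  F : M ⥤ N
  str : ∀ (X : C) (m : M), F.obj ((ρ.act.obj X).obj m) ≅ (σ.act.obj X).obj (F.obj m)
  str_natural_obj : ∀ (X : C) {m m' : M} (h : m ⟶ m'),
    F.map ((ρ.act.obj X).map h) ≫ (str X m').hom =
      (str X m).hom ≫ (σ.act.obj X).map (F.map h)
  str_natural_tensor : ∀ {X X' : C} (f : X ⟶ X') (m : M),
    F.map ((ρ.act.map f).app m) ≫ (str X' m).hom =
      (str X m).hom ≫ (σ.act.map f).app (F.obj m)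
  pentagon : ∀ (X Y : C) (m : M),
    F.map ((ρ.assoc X Y m).hom) ≫ (str X ((ρ.act.obj Y).obj m)).hom ≫
        (σ.act.obj X).map ((str Y m).hom) =
      (str (X ⊗ Y) m).hom ≫ (σ.assoc X Y (F.obj m)).hom
  unit : ∀ (m : M),
    (str (𝟙_ C) m).hom ≫ (σ.unitIso (F.obj m)).hom = F.map ((ρ.unitIso m).hom)

/-- A module natural transformation between module functors (equation (5)). -/
def IsModuleNatTrans {M : Type u₁} [Category.{v₁} M] {N : Type u₂} [Category.{v₂} N]
    {ρ : LeftModuleStr C M} {σ : LeftModuleStr C N}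
    (F G : ModuleFunctor ρ σ) (θ : F.F ⟶ G.F) : Prop :=
  ∀ (X : C) (m : M),
    θ.app ((ρ.act.obj X).obj m) ≫ (G.str X m).hom =
      (F.str X m).hom ≫ (σ.act.obj X).map (θ.app m)

/-- The category `Fun_C(M, N)` of `C`-module functors and module natural
transformations. -/
instance moduleFunctorCategory {M : Type u₁} [Category.{v₁} M] {N : Type u₂} [Category.{v₂} N]
    (ρ : LeftModuleStr C M) (σ : LeftModuleStr C N) :
    Category (ModuleFunctor ρ σ) where
  Hom F G := { θ : F.F ⟶ G.F // IsModuleNatTrans F G θ }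
  id F := ⟨𝟙 F.F, by intro X m; simp⟩
  comp {F G H} θ θ' := ⟨θ.1 ≫ θ'.1, by
    intro X m
    have h1 := θ.2 X m
    have h2 := θ'.2 X m
    simp only [NatTrans.comp_app, Category.assoc, Functor.map_comp]
    rw [h2, reassoc_of% h1]⟩
  id_comp f := by apply Subtype.ext; simp
  comp_id f := by apply Subtype.ext; simp
  assoc f g h := by apply Subtype.ext; simp

section ModuleEnds

variable {M : Type u₁} [Category.{v₁} M] {A : Type u₂} [Category.{v₂} A]

/-- `S(f, g)` for a functor `S : Mᵒᵖ × M ⥤ A`, contravariant in the first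
variable: here `f : m' ⟶ m` and `g : n ⟶ n'`. -/
abbrev smap (S : Mᵒᵖ × M ⥤ A) {m m' n n' : M} (f : m' ⟶ m) (g : n ⟶ n') :
    S.obj (op m, n) ⟶ S.obj (op m', n') :=
  S.map ((f.op, g) : ((op m, n) : Mᵒᵖ × M) ⟶ (op m', n'))

variable [RightRigidCategory C]

/-- A *pre-balancing* for a functor `S : Mᵒᵖ × M ⥤ A`, where `M` is a left
`C`-module category: a family of natural isomorphisms
`β^X_{m,n} : S(m, X ▷ n) ≅ S(Xᘁ ▷ m, n)`. -/
structure PreBalancing (ρ : LeftModuleStr C M) (S : Mᵒᵖ × M ⥤ A) where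
  iso : ∀ (X : C) (m n : M),
    S.obj (op m, (ρ.act.obj X).obj n) ≅ S.obj (op ((ρ.act.obj Xᘁ).obj m), n)
  natural : ∀ (X : C) {m m' n n' : M} (f : m' ⟶ m) (g : n ⟶ n'),
    smap S f ((ρ.act.obj X).map g) ≫ (iso X m' n').hom =
      (iso X m n).hom ≫ smap S ((ρ.act.obj Xᘁ).map f) g
  natural_tensor : ∀ {X X' : C} (f : X ⟶ X') (m n : M),
    smap S (𝟙 m) ((ρ.act.map f).app n) ≫ (iso X' m n).hom =
      (iso X m n).hom ≫ smap S ((ρ.act.map (fᘁ)).app m) (𝟙 n)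

variable (ρ : LeftModuleStr C M) (S : Mᵒᵖ × M ⥤ A)

/-- The canonical morphism `(Xᘁ ⊗ X) ▷ m ⟶ m` induced by the evaluation
(and the unit isomorphism). -/
def evActHom (X : C) (m : M) : (ρ.act.obj (Xᘁ ⊗ X)).obj m ⟶ m :=
  (ρ.act.map (ε_ X Xᘁ)).app m ≫ (ρ.unitIso m).hom

/-- The canonical morphism `m ⟶ (X ⊗ Xᘁ) ▷ m` induced by the coevaluation. -/
def coevActHom (X : C) (m : M) : m ⟶ (ρ.act.obj (X ⊗ Xᘁ)).obj m :=
  (ρ.unitIso m).inv ≫ (ρ.act.map (η_ X Xᘁ)).app m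

variable {ρ S}

/-- A *wedge* for `(S, β)` relative to a class `P` of objects of `C`:
a dinatural family `π` satisfying the module-end compatibility (equation (5)
of Section 3 of the paper) for every `X` in `P`.  Taking `P = fun _ => True`
gives module-end wedges; taking `P = fun _ => False` gives ordinary wedges
(for the ordinary end); an intermediate `P` corresponds to restricting the
module structure to a tensor subcategory. -/
structure ModuleEndCone (β : PreBalancing ρ S) (P : C → Prop) where
  pt : A
  π : ∀ m : M, pt ⟶ S.obj (op m, m)
  dinatural : ∀ {m n : M} (f : m ⟶ n),
    π m ≫ smap S (𝟙 m) f = π n ≫ smap S f (𝟙 n)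
  compat : ∀ (X : C), P X → ∀ (m : M),
    π m ≫ smap S (evActHom ρ X m) (𝟙 m) =
      π ((ρ.act.obj X).obj m) ≫ (β.iso X ((ρ.act.obj X).obj m) m).hom ≫
        smap S ((ρ.assoc Xᘁ X m).hom) (𝟙 m)

/-- Universality: `E` is a *module end* of `(S, β)` (relative to `P`). -/
def IsModuleEnd {β : PreBalancing ρ S} {P : C → Prop} (E : ModuleEndCone β P) : Prop :=
  ∀ (E' : ModuleEndCone β P), ∃! h : E'.pt ⟶ E.pt, ∀ m : M, h ≫ E.π m = E'.π m

/-- A *cowedge* for `(S, β)` relative to `P` (for module coends,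
equation (6) of the paper). -/
structure ModuleCoendCocone (β : PreBalancing ρ S) (P : C → Prop) where
  pt : A
  ι : ∀ m : M, S.obj (op m, m) ⟶ pt
  dinatural : ∀ {m n : M} (f : m ⟶ n),
    smap S f (𝟙 m) ≫ ι m = smap S (𝟙 n) f ≫ ι n
  compat : ∀ (X : C), P X → ∀ (m : M),
    ι m = smap S (𝟙 m) (coevActHom ρ X m ≫ (ρ.assoc X Xᘁ m).hom) ≫
        (β.iso X m ((ρ.act.obj Xᘁ).obj m)).hom ≫ ι ((ρ.act.obj Xᘁ).obj m)

/-- Universality: `E` is a *module coend* of `(S, β)` (relative to `P`). -/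
def IsModuleCoend {β : PreBalancing ρ S} {P : C → Prop} (E : ModuleCoendCocone β P) : Prop :=
  ∀ (E' : ModuleCoendCocone β P), ∃! h : E.pt ⟶ E'.pt, ∀ m : M, E.ι m ≫ h = E'.ι m

end ModuleEnds

section InternalHom

variable {M : Type u₁} [Category.{v₁} M]

/-- Internal Hom data for a left `C`-module category: a bifunctor
`H : Mᵒᵖ × M ⥤ C` together with bijections
`(X ⟶ uhom(m,n)) ≃ (X ▷ m ⟶ n)` natural in all three variables. -/
structure InternalHom (ρ : LeftModuleStr C M) where
  H : Mᵒᵖ × M ⥤ C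
  repr : ∀ (X : C) (m n : M), (X ⟶ H.obj (op m, n)) ≃ ((ρ.act.obj X).obj m ⟶ n)
  repr_natural : ∀ {X X' : C} (f : X ⟶ X') (m n : M) (u : X' ⟶ H.obj (op m, n)),
    repr X m n (f ≫ u) = (ρ.act.map f).app m ≫ repr X' m n u
  repr_natural_m : ∀ (X : C) {m m' : M} (f : m' ⟶ m) (n : M)
      (u : X ⟶ H.obj (op m, n)),
    repr X m' n (u ≫ smap H f (𝟙 n)) = (ρ.act.obj X).map f ≫ repr X m n u
  repr_natural_n : ∀ (X : C) (m : M) {n n' : M} (g : n ⟶ n')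
      (u : X ⟶ H.obj (op m, n)),
    repr X m n' (u ≫ smap H (𝟙 m) g) = repr X m n u ≫ g

variable [RightRigidCategory C]

/-- Internal Hom data for the right `C`-module category `Mᵒᵖ` opposite to a left
`C`-module category `M` (with action `m̄ ◁ X = (Xᘁ ▷ m)‾`): a bifunctor
`H' : M × Mᵒᵖ ⥤ C` (with `H'.obj (m, op n) = uhom_{Mᵒᵖ}(m̄, n̄)`) together with
bijections `(X ⟶ uhom_{Mᵒᵖ}(m̄, n̄)) ≃ (m̄ ◁ X ⟶ n̄) = (n ⟶ Xᘁ ▷ m)`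
natural in all three variables. -/
structure OpInternalHom (ρ : LeftModuleStr C M) where
  H : M × Mᵒᵖ ⥤ C
  repr : ∀ (X : C) (m n : M), (X ⟶ H.obj (m, op n)) ≃ (n ⟶ (ρ.act.obj Xᘁ).obj m)
  repr_natural : ∀ {X X' : C} (f : X ⟶ X') (m n : M) (u : X' ⟶ H.obj (m, op n)),
    repr X m n (f ≫ u) = repr X' m n u ≫ (ρ.act.map (fᘁ)).app m
  repr_natural_m : ∀ (X : C) {m m' : M} (f : m ⟶ m') (n : M)
      (u : X ⟶ H.obj (m, op n)),
    repr X m' n (u ≫ H.map ((f, 𝟙 (op n)) : ((m, op n) : M × Mᵒᵖ) ⟶ (m', op n))) =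
      repr X m n u ≫ (ρ.act.obj Xᘁ).map f
  repr_natural_n : ∀ (X : C) (m : M) {n n' : M} (g : n' ⟶ n)
      (u : X ⟶ H.obj (m, op n)),
    repr X m n' (u ≫ H.map ((𝟙 m, g.op) : ((m, op n) : M × Mᵒᵖ) ⟶ (m, op n'))) =
      g ≫ repr X m n u

end InternalHom


/-! ### Algebras and modules internal to `C` -/

section Algebra

variable {C : Type u} [Category.{v} C] [MonoidalCategory C]

/-- A right module in `C` over an algebra `A` in `C`. -/
structure MRightMod (A : Mon C) where
  X : C
  act : X ⊗ A.X ⟶ X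
  act_one : (X ◁ MonObj.one (X := A.X)) ≫ act = (ρ_ X).hom
  act_mul : (α_ X A.X A.X).hom ≫ (X ◁ MonObj.mul (X := A.X)) ≫ act = (act ▷ A.X) ≫ act

variable [LeftRigidCategory C]

/-- The canonical left `A`-action `λ_{ᘁM} : A ⊗ ᘁM ⟶ ᘁM` on the left dual of a
right `A`-module `M` (equation (14) of the paper). -/
def dualAct (A : Mon C) (M : MRightMod A) : A.X ⊗ (ᘁ(M.X)) ⟶ (ᘁ(M.X)) :=
  (λ_ (A.X ⊗ (ᘁ(M.X)))).inv ≫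
    ((η_ (ᘁ(M.X)) M.X) ▷ (A.X ⊗ (ᘁ(M.X)))) ≫
      (α_ (ᘁ(M.X)) M.X (A.X ⊗ (ᘁ(M.X)))).hom ≫
        ((ᘁ(M.X)) ◁ ((α_ M.X A.X (ᘁ(M.X))).inv ≫ (M.act ▷ (ᘁ(M.X))) ≫
          (ε_ (ᘁ(M.X)) M.X))) ≫
          (ρ_ (ᘁ(M.X))).hom

/-- Morphisms of right `A`-modules. -/
def IsRightModHom {A : Mon C} (M N : MRightMod A) (f : M.X ⟶ N.X) : Prop :=
  M.act ≫ f = (f ▷ A.X) ≫ N.act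

/-- The category of right `A`-modules in `C`. -/
instance mRightModCategory (A : Mon C) : Category (MRightMod A) where
  Hom M N := { f : M.X ⟶ N.X // IsRightModHom M N f }
  id M := ⟨𝟙 M.X, by simp [IsRightModHom]⟩
  comp {M N O} f g := ⟨f.1 ≫ g.1, by
    have hf := f.2
    have hg := g.2
    simp only [IsRightModHom] at *
    rw [← Category.assoc, hf, Category.assoc, hg, ← comp_whiskerRight_assoc]⟩
  id_comp f := by apply Subtype.ext; simp
  comp_id f := by apply Subtype.ext; simp
  assoc f g h := by apply Subtype.ext; simp

end Algebra

/-!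
Both statements rest on two dualities. First, `Hom(X, Tᘁ) ≅ Hom(X ⊗ T, 𝟙) ≅ Hom(T, ᘁX)` naturally
in `X` and `T`, so maps into `Tᘁ`, resp. out of `ᘁT₂`, are maps out of the coequalizer `T`,
resp. `T₂`, i.e. `A`-balanced maps `M ⊗ ᘁN ⟶ ᘁX`, resp. `N ⊗ ᘁM ⟶ Xᘁ`. Second, pulling the
string of `ᘁM` to the right turns `A`-balanced maps `Y ⊗ ᘁM ⟶ Z` into `A`-linear maps
`Y ⟶ Z ⊗ M`: the left action on `ᘁM` is defined precisely so that it corresponds to the right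
action on `M` under the evaluation. This already gives (ii); for (i) one more string, that of
`ᘁX`, is pulled back to the left, turning `A`-linear maps `M ⟶ ᘁX ⊗ N` into `A`-linear maps
`X ⊗ M ⟶ N`.
-/

theorem tensorRightHomEquiv_whiskerRight_comp {X X' Y Y' Z : C} [ExactPairing Y Y']
    (f : X ⟶ X') (w : X' ⊗ Y ⟶ Z) :
    tensorRightHomEquiv X Y Y' Z (f ▷ Y ≫ w) = f ≫ tensorRightHomEquiv X' Y Y' Z w := by
  rw [← Equiv.eq_symm_apply, tensorRightHomEquiv_symm_naturality, Equiv.symm_apply_apply]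

theorem tensorRightHomEquiv_whiskerLeft_comp {X Y Y' Z : C} [HasRightDual Y] [HasRightDual Y']
    (g : Y ⟶ Y') (w : X ⊗ Y' ⟶ Z) :
    tensorRightHomEquiv X Y (Yᘁ) Z (X ◁ g ≫ w) =
      tensorRightHomEquiv X Y' (Y'ᘁ) Z w ≫ Z ◁ gᘁ :=
  calc
    _ = 𝟙 _ ⊗≫ X ◁ (η_ Y (Yᘁ) ≫ g ▷ Yᘁ) ⊗≫ w ▷ Yᘁ := by
      dsimp [tensorRightHomEquiv]; monoidal
    _ = 𝟙 _ ⊗≫ X ◁ (η_ Y' (Y'ᘁ) ≫ Y' ◁ gᘁ) ⊗≫ w ▷ Yᘁ := by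
      rw [coevaluation_comp_rightAdjointMate]
    _ = 𝟙 _ ⊗≫ X ◁ η_ Y' (Y'ᘁ) ⊗≫ ((X ⊗ Y') ◁ gᘁ ≫ w ▷ Yᘁ) := by monoidal
    _ = _ := by
      rw [whisker_exchange]; dsimp [tensorRightHomEquiv]; monoidal

theorem tensorLeftHomEquiv_symm_comp_whiskerRight {X X' Y Z : C} [HasLeftDual X]
    [HasLeftDual X'] (f : X ⟶ X') (k : Y ⟶ (ᘁX' : C) ⊗ Z) :
    (tensorLeftHomEquiv Y (ᘁX) X Z).symm (k ≫ (ᘁf) ▷ Z) =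
      f ▷ Y ≫ (tensorLeftHomEquiv Y (ᘁX') X' Z).symm k :=
  calc
    _ = 𝟙 _ ⊗≫ X ◁ k ⊗≫ (X ◁ (ᘁf) ≫ ε_ (ᘁX : C) X) ▷ Z ⊗≫ 𝟙 _ := by
      dsimp [tensorLeftHomEquiv]; monoidal
    _ = 𝟙 _ ⊗≫ X ◁ k ⊗≫ (f ▷ (ᘁX' : C) ≫ ε_ (ᘁX' : C) X') ▷ Z ⊗≫ 𝟙 _ := by
      rw [leftAdjointMate_comp_evaluation]
    _ = 𝟙 _ ⊗≫ (X ◁ k ≫ f ▷ ((ᘁX' : C) ⊗ Z)) ⊗≫ ε_ (ᘁX' : C) X' ▷ Z ⊗≫ 𝟙 _ := by monoidal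
    _ = _ := by
      rw [whisker_exchange]; dsimp [tensorLeftHomEquiv]; monoidal

def leftDualHomEquiv (X Y : C) [HasLeftDual X] [HasRightDual Y] : (Y ⟶ ᘁX) ≃ (X ⟶ Yᘁ) :=
  (Iso.homCongr (Iso.refl Y) (ρ_ (ᘁX)).symm).trans <|
    (tensorLeftHomEquiv Y (ᘁX) X (𝟙_ C)).symm.trans <|
      (tensorRightHomEquiv X Y (Yᘁ) (𝟙_ C)).trans (Iso.homCongr (Iso.refl X) (λ_ (Yᘁ)))

theorem leftDualHomEquiv_comp_leftAdjointMate {X X' Y : C} [HasLeftDual X] [HasLeftDual X']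
    [HasRightDual Y] (f : X ⟶ X') (k : Y ⟶ ᘁX') :
    leftDualHomEquiv X Y (k ≫ ᘁf) = f ≫ leftDualHomEquiv X' Y k := by
  simp only [leftDualHomEquiv, Equiv.trans_apply, Iso.homCongr_apply, Iso.refl_inv,
    Iso.symm_hom, Category.id_comp]
  rw [Category.assoc, rightUnitor_inv_naturality (ᘁf), ← Category.assoc,
    tensorLeftHomEquiv_symm_comp_whiskerRight, tensorRightHomEquiv_whiskerRight_comp,
    Category.assoc]

theorem leftDualHomEquiv_comp {X Y Y' : C} [HasLeftDual X] [HasRightDual Y] [HasRightDual Y']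
    (g : Y ⟶ Y') (k : Y' ⟶ ᘁX) :
    leftDualHomEquiv X Y (g ≫ k) = leftDualHomEquiv X Y' k ≫ gᘁ := by
  simp only [leftDualHomEquiv, Equiv.trans_apply, Iso.homCongr_apply, Iso.refl_inv,
    Iso.symm_hom, Category.id_comp, Category.assoc]
  rw [tensorLeftHomEquiv_symm_naturality, tensorRightHomEquiv_whiskerLeft_comp, Category.assoc,
    leftUnitor_naturality]

theorem tensorLeftHomEquiv_intertwines_iff {P Q R Y Y' : C} [ExactPairing Y Y']
    (a : P ⊗ R ⟶ P) (b : Q ⊗ R ⟶ Q) (h : Y' ⊗ P ⟶ Q) :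
    (α_ Y' P R).hom ≫ Y' ◁ a ≫ h = h ▷ R ≫ b ↔
      a ≫ tensorLeftHomEquiv P Y Y' Q h =
        tensorLeftHomEquiv P Y Y' Q h ▷ R ≫ (α_ Y Q R).hom ≫ Y ◁ b := by
  have key : tensorLeftHomEquiv (P ⊗ R) Y Y' Q ((α_ Y' P R).inv ≫ h ▷ R ≫ b) =
      tensorLeftHomEquiv P Y Y' Q h ▷ R ≫ (α_ Y Q R).hom ≫ Y ◁ b := by
    dsimp [tensorLeftHomEquiv]; monoidal
  rw [← key, ← Equiv.symm_apply_eq, tensorLeftHomEquiv_symm_naturality, Equiv.symm_apply_apply,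
    Iso.eq_inv_comp]

def intertwinerTensorLeftHomEquiv {P Q R Y Y' : C} [ExactPairing Y Y'] (a : P ⊗ R ⟶ P)
    (b : Q ⊗ R ⟶ Q) :
    { h : Y' ⊗ P ⟶ Q // (α_ Y' P R).hom ≫ Y' ◁ a ≫ h = h ▷ R ≫ b } ≃
      { k : P ⟶ Y ⊗ Q // a ≫ k = k ▷ R ≫ (α_ Y Q R).hom ≫ Y ◁ b } :=
  (tensorLeftHomEquiv P Y Y' Q).subtypeEquiv (tensorLeftHomEquiv_intertwines_iff a b)

section DualAction

variable [LeftRigidCategory C] {A : Mon C}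

theorem whiskerLeft_dualAct_comp_evaluation (P : MRightMod A) :
    P.X ◁ dualAct A P ≫ ε_ (ᘁ(P.X) : C) P.X =
      (α_ P.X A.X (ᘁ(P.X) : C)).inv ≫ P.act ▷ (ᘁ(P.X) : C) ≫ ε_ (ᘁ(P.X) : C) P.X :=
  calc
    _ = 𝟙 _ ⊗≫ P.X ◁ η_ (ᘁ(P.X) : C) P.X ▷ (A.X ⊗ (ᘁ(P.X) : C)) ⊗≫
        ((P.X ⊗ (ᘁ(P.X) : C)) ◁
            ((α_ P.X A.X (ᘁ(P.X) : C)).inv ≫ P.act ▷ (ᘁ(P.X) : C) ≫ ε_ (ᘁ(P.X) : C) P.X)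
          ≫ ε_ (ᘁ(P.X) : C) P.X ▷ (𝟙_ C)) ⊗≫ 𝟙 _ := by
      dsimp only [dualAct]; monoidal
    _ = 𝟙 _ ⊗≫ (P.X ◁ η_ (ᘁ(P.X) : C) P.X ⊗≫ ε_ (ᘁ(P.X) : C) P.X ▷ P.X) ▷ (A.X ⊗ (ᘁ(P.X) : C))
        ⊗≫ ((α_ P.X A.X (ᘁ(P.X) : C)).inv ≫ P.act ▷ (ᘁ(P.X) : C) ≫ ε_ (ᘁ(P.X) : C) P.X) := by
      rw [whisker_exchange]; monoidal
    _ = _ := by rw [ExactPairing.coevaluation_evaluation'']; monoidal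

theorem tensorRightHomEquiv_symm_whiskerRight_comp_act (M : MRightMod A) {Y Z : C}
    (h : Y ⟶ Z ⊗ M.X) :
    (tensorRightHomEquiv (Y ⊗ A.X) (ᘁ(M.X) : C) M.X Z).symm
        (h ▷ A.X ≫ (α_ Z M.X A.X).hom ≫ Z ◁ M.act) =
      (α_ Y A.X (ᘁ(M.X) : C)).hom ≫ Y ◁ dualAct A M ≫
        (tensorRightHomEquiv Y (ᘁ(M.X) : C) M.X Z).symm h :=
  calc
    _ = 𝟙 _ ⊗≫ h ▷ (A.X ⊗ (ᘁ(M.X) : C)) ⊗≫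
          Z ◁ ((α_ M.X A.X (ᘁ(M.X) : C)).inv ≫ M.act ▷ (ᘁ(M.X) : C) ≫
            ε_ (ᘁ(M.X) : C) M.X) ⊗≫ 𝟙 _ := by
      dsimp [tensorRightHomEquiv]; monoidal
    _ = 𝟙 _ ⊗≫ h ▷ (A.X ⊗ (ᘁ(M.X) : C)) ⊗≫
          Z ◁ (M.X ◁ dualAct A M ≫ ε_ (ᘁ(M.X) : C) M.X) ⊗≫ 𝟙 _ := by
      rw [whiskerLeft_dualAct_comp_evaluation]
    _ = 𝟙 _ ⊗≫ (Y ◁ dualAct A M ≫ h ▷ (ᘁ(M.X) : C)) ⊗≫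
          Z ◁ ε_ (ᘁ(M.X) : C) M.X ⊗≫ 𝟙 _ := by
      rw [whisker_exchange]; monoidal
    _ = _ := by
      dsimp [tensorRightHomEquiv]; monoidal

theorem dualAct_balanced_iff (M : MRightMod A) {Y Z : C} (a : Y ⊗ A.X ⟶ Y)
    (g : Y ⊗ (ᘁ(M.X) : C) ⟶ Z) :
    ((α_ Y A.X (ᘁ(M.X) : C)).inv ≫ a ▷ (ᘁ(M.X) : C)) ≫ g = Y ◁ dualAct A M ≫ g ↔
      a ≫ tensorRightHomEquiv Y (ᘁ(M.X) : C) M.X Z g =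
        tensorRightHomEquiv Y (ᘁ(M.X) : C) M.X Z g ▷ A.X ≫ (α_ Z M.X A.X).hom ≫ Z ◁ M.act := by
  rw [← (tensorRightHomEquiv (Y ⊗ A.X) (ᘁ(M.X) : C) M.X Z).symm.apply_eq_iff_eq,
    tensorRightHomEquiv_symm_naturality, tensorRightHomEquiv_symm_whiskerRight_comp_act,
    Equiv.symm_apply_apply, Category.assoc, Iso.inv_comp_eq]

def balancedHomEquiv (M : MRightMod A) {Y : C} (a : Y ⊗ A.X ⟶ Y) (Z : C) :
    { g : Y ⊗ (ᘁ(M.X) : C) ⟶ Z //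
        ((α_ Y A.X (ᘁ(M.X) : C)).inv ≫ a ▷ (ᘁ(M.X) : C)) ≫ g = Y ◁ dualAct A M ≫ g } ≃
      { h : Y ⟶ Z ⊗ M.X // a ≫ h = h ▷ A.X ≫ (α_ Z M.X A.X).hom ≫ Z ◁ M.act } :=
  (tensorRightHomEquiv Y (ᘁ(M.X) : C) M.X Z).subtypeEquiv (dualAct_balanced_iff M a)

end DualAction

section RelativeTensor

open Limits

variable [RigidCategory C] {A : Mon C} (M N : MRightMod A)

noncomputable def internalHomEquiv
    {t : Cofork ((α_ M.X A.X (ᘁ(N.X) : C)).inv ≫ M.act ▷ (ᘁ(N.X) : C)) (M.X ◁ dualAct A N)}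
    (ht : IsColimit t) (X : C) :
    (X ⟶ t.ptᘁ) ≃
      { h : X ⊗ M.X ⟶ N.X // (α_ X M.X A.X).hom ≫ X ◁ M.act ≫ h = h ▷ A.X ≫ N.act } :=
  (leftDualHomEquiv X t.pt).symm.trans <|
    (Cofork.IsColimit.homIso ht (ᘁX : C)).trans <|
      (balancedHomEquiv N M.act (ᘁX : C)).trans (intertwinerTensorLeftHomEquiv M.act N.act).symm

theorem internalHomEquiv_naturality
    {t : Cofork ((α_ M.X A.X (ᘁ(N.X) : C)).inv ≫ M.act ▷ (ᘁ(N.X) : C)) (M.X ◁ dualAct A N)}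
    (ht : IsColimit t) {X X' : C} (f : X ⟶ X') (u : X' ⟶ t.ptᘁ) :
    (internalHomEquiv M N ht X (f ≫ u)).1 = f ▷ M.X ≫ (internalHomEquiv M N ht X' u).1 := by
  have hmate : (leftDualHomEquiv X t.pt).symm (f ≫ u) =
      (leftDualHomEquiv X' t.pt).symm u ≫ ᘁf := by
    rw [Equiv.symm_apply_eq, leftDualHomEquiv_comp_leftAdjointMate, Equiv.apply_symm_apply]
  simp only [internalHomEquiv, intertwinerTensorLeftHomEquiv, balancedHomEquiv,
    Equiv.trans_apply, Equiv.subtypeEquiv_symm, Equiv.subtypeEquiv_apply,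
    Cofork.IsColimit.homIso_apply_coe, hmate]
  rw [← Category.assoc, tensorRightHomEquiv_naturality, tensorLeftHomEquiv_symm_comp_whiskerRight]

noncomputable def opInternalHomEquiv
    {t : Cofork ((α_ N.X A.X (ᘁ(M.X) : C)).inv ≫ N.act ▷ (ᘁ(M.X) : C)) (N.X ◁ dualAct A M)}
    (ht : IsColimit t) (X : C) :
    (X ⟶ ᘁt.pt) ≃
      { h : N.X ⟶ Xᘁ ⊗ M.X // N.act ≫ h = h ▷ A.X ≫ (α_ (Xᘁ) M.X A.X).hom ≫ Xᘁ ◁ M.act } :=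
  (leftDualHomEquiv t.pt X).trans <|
    (Cofork.IsColimit.homIso ht (Xᘁ)).trans <|
      balancedHomEquiv M N.act (Xᘁ)

theorem opInternalHomEquiv_naturality
    {t : Cofork ((α_ N.X A.X (ᘁ(M.X) : C)).inv ≫ N.act ▷ (ᘁ(M.X) : C)) (N.X ◁ dualAct A M)}
    (ht : IsColimit t) {X X' : C} (f : X ⟶ X') (u : X' ⟶ ᘁt.pt) :
    (opInternalHomEquiv M N ht X (f ≫ u)).1 = (opInternalHomEquiv M N ht X' u).1 ≫ fᘁ ▷ M.X := by
  simp only [opInternalHomEquiv, balancedHomEquiv, Equiv.trans_apply, Equiv.subtypeEquiv_apply,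
    Cofork.IsColimit.homIso_apply_coe, leftDualHomEquiv_comp]
  rw [← Category.assoc, tensorRightHomEquiv_naturality]

end RelativeTensor

variable {k : Type w} [Field k]

theorem statement3_general
    {C : Type u} [Category.{v} C]
    [MonoidalCategory C]
    [RigidCategory C]
    (A : Mon C) (M N : MRightMod A)
    -- the relative tensor product `T = M ⊗_A ᘁN` (a coequalizer):
    (T : C) (piT : M.X ⊗ (ᘁ(N.X)) ⟶ T)
    (hcoeq : (α_ M.X A.X (ᘁ(N.X))).inv ≫ (M.act ▷ (ᘁ(N.X))) ≫ piT =
      (M.X ◁ dualAct A N) ≫ piT)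
    (huniv : ∀ {Z : C} (h : M.X ⊗ (ᘁ(N.X)) ⟶ Z),
      ((α_ M.X A.X (ᘁ(N.X))).inv ≫ (M.act ▷ (ᘁ(N.X))) ≫ h =
        (M.X ◁ dualAct A N) ≫ h) → ∃! g : T ⟶ Z, piT ≫ g = h)
    -- the relative tensor product `T₂ = N ⊗_A ᘁM`:
    (T₂ : C) (piT₂ : N.X ⊗ (ᘁ(M.X)) ⟶ T₂)
    (hcoeq₂ : (α_ N.X A.X (ᘁ(M.X))).inv ≫ (N.act ▷ (ᘁ(M.X))) ≫ piT₂ =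
      (N.X ◁ dualAct A M) ≫ piT₂)
    (huniv₂ : ∀ {Z : C} (h : N.X ⊗ (ᘁ(M.X)) ⟶ Z),
      ((α_ N.X A.X (ᘁ(M.X))).inv ≫ (N.act ▷ (ᘁ(M.X))) ≫ h =
        (N.X ◁ dualAct A M) ≫ h) → ∃! g : T₂ ⟶ Z, piT₂ ≫ g = h) :
    -- (i) `Tᘁ = (M ⊗_A ᘁN)ᘁ` represents `X ↦ Hom_A(X ▷ M, N)`, naturally:
    (∃ e : ∀ X : C,
        (X ⟶ (Tᘁ)) ≃
          { h : X ⊗ M.X ⟶ N.X //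
            (α_ X M.X A.X).hom ≫ (X ◁ M.act) ≫ h = (h ▷ A.X) ≫ N.act },
      ∀ {X X' : C} (f : X ⟶ X') (u : X' ⟶ (Tᘁ)),
        ((e X) (f ≫ u)).1 = (f ▷ M.X) ≫ ((e X') u).1) ∧
    -- (ii) `ᘁT₂ = ᘁ(N ⊗_A ᘁM)` represents `X ↦ Hom_A(N, Xᘁ ▷ M)`, naturally:
    (∃ e₂ : ∀ X : C,
        (X ⟶ (ᘁT₂)) ≃
          { h : N.X ⟶ (Xᘁ) ⊗ M.X //
            N.act ≫ h =
              (h ▷ A.X) ≫ (α_ (Xᘁ) M.X A.X).hom ≫ ((Xᘁ) ◁ M.act) },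
      ∀ {X X' : C} (f : X ⟶ X') (u : X' ⟶ (ᘁT₂)),
        ((e₂ X) (f ≫ u)).1 = ((e₂ X') u).1 ≫ ((fᘁ) ▷ M.X)) := by
  have hT : Limits.IsColimit (Limits.Cofork.ofπ piT ((Category.assoc _ _ _).trans hcoeq)) :=
    Limits.Cofork.IsColimit.ofExistsUnique fun s =>
      huniv s.π ((Category.assoc _ _ _).symm.trans s.condition)
  have hT₂ : Limits.IsColimit (Limits.Cofork.ofπ piT₂ ((Category.assoc _ _ _).trans hcoeq₂)) :=
    Limits.Cofork.IsColimit.ofExistsUnique fun s =>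
      huniv₂ s.π ((Category.assoc _ _ _).symm.trans s.condition)
  exact ⟨⟨internalHomEquiv M N hT, internalHomEquiv_naturality M N hT⟩,
    ⟨opInternalHomEquiv M N hT₂, opInternalHomEquiv_naturality M N hT₂⟩⟩

theorem statement3
    {C : Type u} [Category.{v} C] [Abelian C] [CategoryTheory.Linear k C]
    [MonoidalCategory C] [MonoidalPreadditive C] [MonoidalLinear k C]
    [RigidCategory C] [Simple (𝟙_ C)]
    (A : Mon C) (M N : MRightMod A)
    -- the relative tensor product `T = M ⊗_A ᘁN` (a coequalizer):
    (T : C) (piT : M.X ⊗ (ᘁ(N.X)) ⟶ T)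
    (hcoeq : (α_ M.X A.X (ᘁ(N.X))).inv ≫ (M.act ▷ (ᘁ(N.X))) ≫ piT =
      (M.X ◁ dualAct A N) ≫ piT)
    (huniv : ∀ {Z : C} (h : M.X ⊗ (ᘁ(N.X)) ⟶ Z),
      ((α_ M.X A.X (ᘁ(N.X))).inv ≫ (M.act ▷ (ᘁ(N.X))) ≫ h =
        (M.X ◁ dualAct A N) ≫ h) → ∃! g : T ⟶ Z, piT ≫ g = h)
    -- the relative tensor product `T₂ = N ⊗_A ᘁM`:
    (T₂ : C) (piT₂ : N.X ⊗ (ᘁ(M.X)) ⟶ T₂)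
    (hcoeq₂ : (α_ N.X A.X (ᘁ(M.X))).inv ≫ (N.act ▷ (ᘁ(M.X))) ≫ piT₂ =
      (N.X ◁ dualAct A M) ≫ piT₂)
    (huniv₂ : ∀ {Z : C} (h : N.X ⊗ (ᘁ(M.X)) ⟶ Z),
      ((α_ N.X A.X (ᘁ(M.X))).inv ≫ (N.act ▷ (ᘁ(M.X))) ≫ h =
        (N.X ◁ dualAct A M) ≫ h) → ∃! g : T₂ ⟶ Z, piT₂ ≫ g = h) :
    -- (i) `Tᘁ = (M ⊗_A ᘁN)ᘁ` represents `X ↦ Hom_A(X ▷ M, N)`, naturally: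
    (∃ e : ∀ X : C,
        (X ⟶ (Tᘁ)) ≃
          { h : X ⊗ M.X ⟶ N.X //
            (α_ X M.X A.X).hom ≫ (X ◁ M.act) ≫ h = (h ▷ A.X) ≫ N.act },
      ∀ {X X' : C} (f : X ⟶ X') (u : X' ⟶ (Tᘁ)),
        ((e X) (f ≫ u)).1 = (f ▷ M.X) ≫ ((e X') u).1) ∧
    -- (ii) `ᘁT₂ = ᘁ(N ⊗_A ᘁM)` represents `X ↦ Hom_A(N, Xᘁ ▷ M)`, naturally:
    (∃ e₂ : ∀ X : C,
        (X ⟶ (ᘁT₂)) ≃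
          { h : N.X ⟶ (Xᘁ) ⊗ M.X //
            N.act ≫ h =
              (h ▷ A.X) ≫ (α_ (Xᘁ) M.X A.X).hom ≫ ((Xᘁ) ◁ M.act) },
      ∀ {X X' : C} (f : X ⟶ X') (u : X' ⟶ (ᘁT₂)),
        ((e₂ X) (f ≫ u)).1 = ((e₂ X') u).1 ≫ ((fᘁ) ▷ M.X)) :=
  statement3_general A M N T piT hcoeq huniv T₂ piT₂ hcoeq₂ huniv₂
end TensorModuleEnd
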